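/- Let a ∈ ℂ, b₀ ∈ ℂ with 1+b₀ ≠ 0, and let (b_n)_{n≥1} be complex numbers. Define c₁ = a b₁ (1+b₀)^{a-1} and, recursively for n ≥ 2, c_n = (1/(n(1+b₀))) [ n a (1+b₀)^a b_n + Σ_{k=1}^{n-1} (ka-(n-k)) b_k c_{n-k} ]. Then for every n ≥ 1, c_n = a(1+b₀)^{a-1} [ b_n + Σ_{j=1}^{n-1} b_j Σ_{l=1}^{n-j} (1+b₀)^{-l} Σ_{{s₁<...<s_l}⊆[n-j], s_l=n-j} Π_{q=1}^{l} ((a(s_q - s_{q-1}) - s_{q-1} - j)/(s_q + j)) b_{s_q - s_{q-1}} ], where s₀ := 0. -/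

import Mathlib

/-!
Write `T_j(m)` for the inner sum over chains `0 = s₀ < s₁ < ⋯ < s_l = m`, so that `T_j(0) = 1`.
Splitting off the last step `s_l - s_{l-1} = k` of a chain gives the recursion
`(1 + b₀)(m + j) T_j(m) = ∑_{k=1}^m (a k - (m - k) - j) b_k T_j(m - k)`.
Feeding it into `d_n = ∑_{j=1}^n b_j T_j(n - j)` and exchanging the double sum over `j + k ≤ n`
shows that `a (1 + b₀)^(a-1) d_n` satisfies the recursion defining `c_n`, whence the two agree.
-/

open Finset

section ChainProd

variable {α M : Type*} [CommMonoid M] (g : α → α → M)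

def chainProd : List α → α → M
  | [], _ => 1
  | x :: xs, p => g x p * chainProd xs x

theorem chainProd_eq_prod_range_getD (L : List α) (p d : α) :
    chainProd g L p =
      ∏ q ∈ range L.length, g (L.getD q d) (if q = 0 then p else L.getD (q - 1) d) := by
  induction L generalizing p with
  | nil => rfl
  | cons x xs ih =>
    rw [chainProd, ih, List.length_cons, prod_range_succ', mul_comm]
    congr 1
    refine prod_congr rfl fun q _ => ?_
    cases q <;> simp

theorem chainProd_append_singleton (L : List α) (m p : α) :
    chainProd g (L ++ [m]) p = chainProd g L p * g m (L.getLastD p) := by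
  induction L generalizing p with
  | nil => simp [chainProd]
  | cons x xs ih => rw [List.cons_append, chainProd, ih, chainProd, List.getLastD_cons, mul_assoc]

end ChainProd

theorem Finset.sort_insert_of_forall_lt {α : Type*} [LinearOrder α] {s : Finset α} {m : α}
    (h : ∀ x ∈ s, x < m) : (insert m s).sort = s.sort ++ [m] := by
  refine (sortedLT_sort _).pairwise.eq_of_mem_iff ?_ fun x => by simp [or_comm]
  exact List.pairwise_append.2 ⟨(sortedLT_sort s).pairwise, List.pairwise_singleton _ _,
    fun x hx y hy => List.mem_singleton.1 hy ▸ h x ((mem_sort _).1 hx)⟩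

theorem Finset.getLastD_sort {α : Type*} [LinearOrder α] [OrderBot α] (s : Finset α) :
    s.sort.getLastD ⊥ = s.sup id := by
  rcases s.eq_empty_or_nonempty with rfl | hs
  · simp
  · have hne : s.sort ≠ [] := by simpa [← List.length_pos_iff_ne_nil] using hs
    rw [List.getLastD_eq_getLast?, List.getLast?_eq_some_getLast hne, Option.getD_some,
      List.getLast_eq_getElem, sorted_last_eq_max', max'_eq_sup', sup'_eq_sup]


theorem Finset.sup_id_eq_iff_mem {α : Type*} [LinearOrder α] [OrderBot α] {s : Finset α} {m : α}
    (hm : m ≠ ⊥) (hs : ∀ x ∈ s, x ≤ m) : s.sup id = m ↔ m ∈ s := by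
  refine ⟨fun h => ?_, fun h => le_antisymm (Finset.sup_le hs) (le_sup (f := id) h)⟩
  have hne : s.Nonempty := nonempty_iff_ne_empty.2 fun hs0 => hm (by rw [← h, hs0, sup_empty])
  obtain ⟨x, hx, hx'⟩ := exists_mem_eq_sup s hne id
  rwa [← h, hx']

theorem sum_Icc_one_eq_sum_range_sub {M : Type*} [AddCommMonoid M] (f : ℕ → M) (m : ℕ) :
    ∑ k ∈ Icc 1 m, f k = ∑ t ∈ range m, f (m - t) := by
  refine sum_nbij' (m - ·) (m - ·) ?_ ?_ ?_ ?_ fun k hk => ?_ <;>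
    simp only [mem_Icc, mem_range] at * <;> grind

section ChainSum

variable {R : Type*} [CommSemiring R] (r : R) (g : ℕ → ℕ → R)

def chainWeight (S : Finset ℕ) : R := r ^ S.card * chainProd g S.sort 0

/-- Chains `0 < s₁ < ⋯ < s_l = m` are encoded as subsets of `[1, m]` with supremum `m`; for `m = 0`
this leaves only the empty chain. -/
def chainSum (m : ℕ) : R :=
  ∑ S ∈ (Icc 1 m).powerset.filter (fun S => S.sup id = m), chainWeight r g S

theorem chainWeight_insert {S : Finset ℕ} {m : ℕ} (h : ∀ x ∈ S, x < m) :
    chainWeight r g (insert m S) = r * g m (S.sup id) * chainWeight r g S := by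
  have hm : m ∉ S := fun hm => (h m hm).false
  rw [chainWeight, chainWeight, card_insert_of_notMem hm, sort_insert_of_forall_lt h,
    chainProd_append_singleton, ← bot_eq_zero, getLastD_sort]
  ring

@[simp]
theorem chainSum_zero : chainSum r g 0 = 1 := by
  simp [chainSum, chainWeight, filter_singleton, chainProd]

theorem filter_powerset_Icc_sup_eq_succ (m : ℕ) :
    (Icc 1 (m + 1)).powerset.filter (fun S => S.sup id = m + 1) =
      (Icc 1 m).powerset.image (insert (m + 1)) := by
  ext S
  simp only [mem_filter, mem_powerset, mem_image]
  constructor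
  · rintro ⟨hS, hsup⟩
    have hmem : m + 1 ∈ S :=
      (sup_id_eq_iff_mem m.succ_ne_zero fun x hx => (mem_Icc.1 (hS hx)).2).1 hsup
    refine ⟨S.erase (m + 1), fun x hx => ?_, insert_erase hmem⟩
    have := mem_Icc.1 (hS (mem_of_mem_erase hx))
    exact mem_Icc.2 ⟨this.1, Nat.le_of_lt_succ (lt_of_le_of_ne this.2 (ne_of_mem_erase hx))⟩
  · rintro ⟨T, hT, rfl⟩
    refine ⟨insert_subset (by simp) (hT.trans (Icc_subset_Icc_right m.le_succ)), ?_⟩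
    rw [sup_insert, id, sup_eq_left]
    exact (Finset.sup_le fun x hx => (mem_Icc.1 (hT hx)).2).trans m.le_succ

theorem filter_powerset_Icc_sup_eq {m t : ℕ} (ht : t ≤ m) :
    (Icc 1 m).powerset.filter (fun S => S.sup id = t) =
      (Icc 1 t).powerset.filter (fun S => S.sup id = t) := by
  ext S
  simp only [mem_filter, mem_powerset, and_congr_left_iff]
  rintro rfl
  exact ⟨fun h x hx => mem_Icc.2 ⟨(mem_Icc.1 (h hx)).1, le_sup (f := id) hx⟩,
    fun h => h.trans (Icc_subset_Icc_right ht)⟩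

theorem chainSum_succ (m : ℕ) :
    chainSum r g (m + 1) = r * ∑ t ∈ range (m + 1), g (m + 1) t * chainSum r g t := by
  have hlt : ∀ T ∈ (Icc 1 m).powerset, ∀ x ∈ T, x < m + 1 := fun T hT x hx =>
    Nat.lt_succ_of_le (mem_Icc.1 (mem_powerset.1 hT hx)).2
  rw [chainSum, filter_powerset_Icc_sup_eq_succ, sum_image fun T hT U hU hTU => ?_]
  · rw [mul_sum, ← sum_fiberwise_of_maps_to (g := fun T => T.sup id) (t := range (m + 1))]
    · refine sum_congr rfl fun t ht => ?_
      rw [chainSum, ← filter_powerset_Icc_sup_eq (Nat.lt_succ_iff.1 (mem_range.1 ht)), mul_sum,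
        mul_sum]
      refine sum_congr rfl fun T hT => ?_
      rw [chainWeight_insert r g (hlt T (mem_filter.1 hT).1), (mem_filter.1 hT).2]
      ring
    · intro T hT
      exact mem_range.2 (Nat.lt_succ_of_le
        (Finset.sup_le fun x hx => (mem_Icc.1 (mem_powerset.1 hT hx)).2))
  · have hU : m + 1 ∉ U := fun h => (hlt U hU _ h).false
    have hT' : m + 1 ∉ T := fun h => (hlt T hT _ h).false
    rw [← erase_insert hT', hTU, erase_insert hU]

theorem chainSum_eq_sum_card {m : ℕ} (hm : 0 < m) :
    chainSum r g m = ∑ l ∈ Icc 1 m, r ^ l *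
      ∑ S ∈ (Icc 1 m).powerset.filter (fun S => m ∈ S ∧ S.card = l),
        ∏ q ∈ range l, g (S.sort.getD q 0) (if q = 0 then 0 else S.sort.getD (q - 1) 0) := by
  have hsup : ∀ S ∈ (Icc 1 m).powerset, S.sup id = m ↔ m ∈ S := fun S hS =>
    sup_id_eq_iff_mem hm.ne' fun x hx => (mem_Icc.1 (mem_powerset.1 hS hx)).2
  rw [chainSum, ← sum_fiberwise_of_maps_to (g := card) (t := Icc 1 m)]
  · refine sum_congr rfl fun l _ => ?_
    rw [mul_sum, filter_filter]
    refine sum_congr (filter_congr fun S hS => by rw [hsup S hS]) fun S hS => ?_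
    rw [chainWeight, (mem_filter.1 hS).2.2, chainProd_eq_prod_range_getD g _ 0 0, length_sort,
      (mem_filter.1 hS).2.2]
  · intro S hS
    obtain ⟨hS, hmS⟩ := mem_filter.1 hS
    exact mem_Icc.2 ⟨card_pos.2 ⟨m, (hsup S hS).1 hmS⟩,
      (card_le_card (mem_powerset.1 hS)).trans (by simp)⟩

end ChainSum

noncomputable section Miller

variable (a b0 : ℂ) (b : ℕ → ℂ)

def millerFactor (j sq sp : ℕ) : ℂ :=
  (a * ((sq : ℂ) - (sp : ℂ)) - (sp : ℂ) - (j : ℂ)) / ((sq : ℂ) + (j : ℂ)) * b (sq - sp)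

def millerChain (j : ℕ) : ℕ → ℂ := chainSum (1 + b0)⁻¹ (millerFactor a b j)

/-- The bracket of the formula, with `b n` as the summand `j = n` (where `millerChain` is `1`). -/
def millerSeq (n : ℕ) : ℂ := ∑ j ∈ Icc 1 n, b j * millerChain a b0 b j (n - j)

variable {b0}

theorem millerChain_rec (hb0 : 1 + b0 ≠ 0) (j : ℕ) {m : ℕ} (hm : 0 < m) :
    (1 + b0) * ((m + j : ℕ) : ℂ) * millerChain a b0 b j m =
      ∑ k ∈ Icc 1 m, (a * k - ((m - k : ℕ) : ℂ) - j) * b k * millerChain a b0 b j (m - k) := by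
  obtain ⟨m, rfl⟩ : ∃ m', m = m' + 1 := ⟨m - 1, by omega⟩
  have hfactor : ∀ t ∈ range (m + 1), ((m + 1 + j : ℕ) : ℂ) * millerFactor a b j (m + 1) t =
      (a * ((m + 1 - t : ℕ) : ℂ) - t - j) * b (m + 1 - t) := by
    intro t ht
    have hmj : ((m + 1 + j : ℕ) : ℂ) ≠ 0 := Nat.cast_ne_zero.2 (by omega)
    rw [millerFactor, Nat.cast_sub (mem_range.1 ht).le]
    push_cast at hmj ⊢
    field_simp
  rw [millerChain, chainSum_succ, sum_Icc_one_eq_sum_range_sub, mul_sum, mul_sum]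
  refine sum_congr rfl fun t ht => ?_
  rw [Nat.sub_sub_self (mem_range.1 ht).le, ← hfactor t ht]
  field_simp

theorem millerSeq_rec (hb0 : 1 + b0 ≠ 0) {n : ℕ} (hn : 0 < n) :
    (n : ℂ) * (1 + b0) * millerSeq a b0 b n = n * (1 + b0) * b n +
      ∑ k ∈ Icc 1 (n - 1), ((k : ℂ) * a - ((n - k : ℕ) : ℂ)) * b k * millerSeq a b0 b (n - k) := by
  obtain ⟨n, rfl⟩ : ∃ n', n = n' + 1 := ⟨n - 1, by omega⟩
  have hchain : ∀ j ∈ Icc 1 n,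
      b j * (((n + 1 : ℕ) : ℂ) * (1 + b0) * millerChain a b0 b j (n + 1 - j)) =
        ∑ k ∈ Icc 1 (n + 1 - j), b j *
          ((a * k - ((n + 1 - j - k : ℕ) : ℂ) - j) * b k *
            millerChain a b0 b j (n + 1 - j - k)) := by
    intro j hj
    rw [← mul_sum, ← millerChain_rec a b hb0 j (by grind), Nat.sub_add_cancel (by grind)]
    ring
  have hswap : ∀ j k,
      j ∈ Icc 1 n ∧ k ∈ Icc 1 (n + 1 - j) ↔ j ∈ Icc 1 (n + 1 - k) ∧ k ∈ Icc 1 n := by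
    simp only [mem_Icc]
    omega
  calc ((n + 1 : ℕ) : ℂ) * (1 + b0) * millerSeq a b0 b (n + 1)
      = ∑ j ∈ Icc 1 n, b j * (((n + 1 : ℕ) : ℂ) * (1 + b0) * millerChain a b0 b j (n + 1 - j)) +
          ((n + 1 : ℕ) : ℂ) * (1 + b0) * b (n + 1) := by
        rw [millerSeq, sum_Icc_succ_top (by omega), Nat.sub_self, millerChain, chainSum_zero,
          mul_one, mul_add, mul_sum]
        exact congrArg (· + _) (sum_congr rfl fun j _ => mul_left_comm _ _ _)
    _ = ∑ k ∈ Icc 1 n, ∑ j ∈ Icc 1 (n + 1 - k),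
          ((k : ℂ) * a - ((n + 1 - k : ℕ) : ℂ)) * b k *
            (b j * millerChain a b0 b j (n + 1 - k - j)) +
          ((n + 1 : ℕ) : ℂ) * (1 + b0) * b (n + 1) := by
        rw [sum_congr rfl hchain, sum_comm' hswap]
        congr 1
        refine sum_congr rfl fun k hk => sum_congr rfl fun j hj => ?_
        obtain ⟨t, ht⟩ : ∃ t, n + 1 = j + k + t := ⟨n + 1 - j - k, by grind⟩
        rw [show n + 1 - j - k = t by omega, show n + 1 - k - j = t by omega,
          show n + 1 - k = j + t by omega]
        push_cast
        ring
    _ = _ := by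
        rw [add_comm, Nat.add_sub_cancel]
        simp_rw [millerSeq, mul_sum]

theorem eq_mul_millerSeq (hb0 : 1 + b0 ≠ 0) {c : ℕ → ℂ}
    (hc1 : c 1 = a * b 1 * (1 + b0) ^ (a - 1))
    (hrec : ∀ n : ℕ, 2 ≤ n →
      c n = (1 / ((n : ℂ) * (1 + b0))) *
        ((n : ℂ) * a * (1 + b0) ^ a * b n +
          ∑ k ∈ Icc 1 (n - 1), ((k : ℂ) * a - ((n - k : ℕ) : ℂ)) * b k * c (n - k)))
    {n : ℕ} (hn : 1 ≤ n) : c n = a * (1 + b0) ^ (a - 1) * millerSeq a b0 b n := by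
  induction n using Nat.strong_induction_on with
  | _ n ih =>
  obtain rfl | hn2 := hn.eq_or_lt
  · simp [hc1, millerSeq, millerChain]
    ring
  have hpow : (1 + b0) ^ a = (1 + b0) * (1 + b0) ^ (a - 1) := by
    conv_lhs => rw [← add_sub_cancel 1 a]
    rw [Complex.cpow_add _ _ hb0, Complex.cpow_one]
  have hn0 : (n : ℂ) ≠ 0 := Nat.cast_ne_zero.2 (by omega)
  calc c n = 1 / (n * (1 + b0)) * (n * a * (1 + b0) ^ a * b n +
        ∑ k ∈ Icc 1 (n - 1), ((k : ℂ) * a - ((n - k : ℕ) : ℂ)) * b k * c (n - k)) := hrec n hn2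
    _ = 1 / (n * (1 + b0)) * (a * (1 + b0) ^ (a - 1) * (n * (1 + b0) * b n +
        ∑ k ∈ Icc 1 (n - 1),
          ((k : ℂ) * a - ((n - k : ℕ) : ℂ)) * b k * millerSeq a b0 b (n - k))) := by
      congr 1
      rw [hpow, mul_add, mul_sum]
      congr 1
      · ring
      · refine sum_congr rfl fun k hk => ?_
        rw [ih (n - k) (by grind) (by grind)]
        ring
    _ = 1 / (n * (1 + b0)) * (a * (1 + b0) ^ (a - 1) * (n * (1 + b0) * millerSeq a b0 b n)) := by
      rw [millerSeq_rec a b hb0 (by omega)]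
    _ = a * (1 + b0) ^ (a - 1) * millerSeq a b0 b n := by
      field_simp

end Miller

/-- **Explicit form of the generalized J.C.P. Miller formula.**  Let
`a ∈ ℂ`, `b₀ ∈ ℂ` with `1 + b₀ ≠ 0` and `(b_n)_{n≥1}` complex numbers.
Define `c₁ = a b₁ (1+b₀)^{a-1}` and recursively, for `n ≥ 2`,
`c_n = (1/(n(1+b₀))) [ n a (1+b₀)^a b_n + ∑_{k=1}^{n-1} (k a-(n-k)) b_k c_{n-k} ]`.
Then for every `n ≥ 1`,
`c_n = a (1+b₀)^{a-1} [ b_n + ∑_{j=1}^{n-1} b_j ∑_{l=1}^{n-j} (1+b₀)^{-l}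
  ∑_{{s₁<…<s_l}⊆[n-j], s_l=n-j} ∏_{q=1}^l
    ((a(s_q-s_{q-1}) - s_{q-1} - j)/(s_q+j)) b_{s_q-s_{q-1}} ]`,
with `s₀ := 0`; the inner sum runs over subsets `S ⊆ {1,…,n-j}` with
`n-j ∈ S` and `#S = l`, listed increasingly (so `s_q` is the `q`-th
smallest element of `S`). -/
theorem explicit_general_jcp_miller (a b0 : ℂ) (hb0 : 1 + b0 ≠ 0)
    (b c : ℕ → ℂ)
    (hc1 : c 1 = a * b 1 * (1 + b0) ^ (a - 1))
    (hrec : ∀ n : ℕ, 2 ≤ n →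
      c n = (1 / ((n : ℂ) * (1 + b0))) *
        ((n : ℂ) * a * (1 + b0) ^ a * b n +
          ∑ k ∈ Finset.Icc 1 (n - 1),
            ((k : ℂ) * a - ((n - k : ℕ) : ℂ)) * b k * c (n - k))) :
    ∀ n : ℕ, 1 ≤ n →
      c n = a * (1 + b0) ^ (a - 1) *
        (b n + ∑ j ∈ Finset.Icc 1 (n - 1), b j *
          ∑ l ∈ Finset.Icc 1 (n - j), ((1 + b0) ^ l)⁻¹ *
            ∑ S ∈ (Finset.Icc 1 (n - j)).powerset.filter
                (fun S => (n - j) ∈ S ∧ S.card = l),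
              ∏ q ∈ Finset.range l,
                (fun sq sp : ℕ =>
                    ((a * ((sq : ℂ) - (sp : ℂ)) - (sp : ℂ) - (j : ℂ)) /
                        ((sq : ℂ) + (j : ℂ))) * b (sq - sp))
                  ((S.sort (· ≤ ·)).getD q 0)
                  (if q = 0 then 0 else (S.sort (· ≤ ·)).getD (q - 1) 0)) := by
  intro n hn
  rw [eq_mul_millerSeq a b hb0 hc1 hrec hn]
  obtain ⟨n, rfl⟩ : ∃ m, n = m + 1 := ⟨n - 1, by omega⟩
  rw [millerSeq, sum_Icc_succ_top (by omega), Nat.sub_self, Nat.add_sub_cancel, millerChain,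
    chainSum_zero, mul_one, add_comm _ (b (n + 1))]
  congr 2
  refine sum_congr rfl fun j hj => ?_
  rw [millerChain, chainSum_eq_sum_card _ _ (by grind)]
  simp only [inv_pow, millerFactor]
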